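/- arXiv:1009.5581 — 2 statements merged into one kernel-verified Lean document; each statement's English description precedes it below -/
import Mathlib

section
/- Let μ be a nonzero positive measure on (0,∞) with ∫ dμ(t)/t < ∞, K its Cauchy transform, ε > 0, n ≥ 1. Then H_n(z) = z² + ε n² z + n² − n² K(z) has at most one zero in ℂ₊, and any such zero satisfies Re z < 0. -/
open MeasureTheory Complex ComplexConjugate

/-!
Write `H(z) = z² + a z + b - b ∫ dν(t) / (z + t)` and
`G(z, w) = z + w + a + b ∫ dν(t) / ((z + t)(w + t))`, so that `H(z) - H(w) = (z - w) G(z, w)`,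
and `G` vanishes at any pair of distinct non-real zeros of `H`. Zeros come in conjugate pairs, so
for a zero `z` in the upper half plane `G(z, z̄) = 2 Re z + a + b ∫ dν / |z + t|² = 0`, which
forces `Re z < 0`. For two distinct zeros `z, w` there, the combination
`G(z, z̄) + G(w, w̄) - G(z, w) - G(z̄, w̄)` of four vanishing values equals
`b ∫ |(z + t)⁻¹ - (w̄ + t)⁻¹|² dν`, which is positive since `z ≠ w̄` and `ν ≠ 0`.
-/

section CauchyTransform

variable {ν : Measure ℝ} {z w : ℂ}

lemma add_ofReal_ne_zero (hz : z.im ≠ 0) (t : ℝ) : z + t ≠ 0 :=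
  fun h => hz (by simpa using congrArg im h)

lemma abs_im_le_norm_add_ofReal (z : ℂ) (t : ℝ) : |z.im| ≤ ‖z + t‖ := by
  simpa using abs_im_le_norm (z + t)

lemma abs_le_mul_norm_add_ofReal (hz : z.im ≠ 0) (t : ℝ) :
    |t| ≤ (1 + ‖z‖ / |z.im|) * ‖z + t‖ := by
  have hnorm : ‖z‖ ≤ ‖z‖ / |z.im| * ‖z + t‖ :=
    calc ‖z‖ = ‖z‖ / |z.im| * |z.im| := by field_simp
      _ ≤ ‖z‖ / |z.im| * ‖z + t‖ := by gcongr; exact abs_im_le_norm_add_ofReal z t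
  calc |t| = ‖(z + t) - z‖ := by simp
    _ ≤ ‖z + t‖ + ‖z‖ := norm_sub_le _ _
    _ ≤ (1 + ‖z‖ / |z.im|) * ‖z + t‖ := by linarith

lemma norm_inv_add_ofReal_le (hz : z.im ≠ 0) {t : ℝ} (ht : t ≠ 0) :
    ‖(z + t)⁻¹‖ ≤ (1 + ‖z‖ / |z.im|) * ‖t⁻¹‖ := by
  have hpos : 0 < ‖z + t‖ := (abs_pos.2 hz).trans_le (abs_im_le_norm_add_ofReal z t)
  rw [norm_inv, norm_inv, Real.norm_eq_abs, ← div_eq_mul_inv, le_div_iff₀ (abs_pos.2 ht),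
    inv_mul_le_iff₀ hpos, mul_comm]
  exact abs_le_mul_norm_add_ofReal hz t

lemma norm_inv_add_ofReal_le_inv_abs_im (hz : z.im ≠ 0) (t : ℝ) :
    ‖(z + t)⁻¹‖ ≤ |z.im|⁻¹ := by
  rw [norm_inv]
  exact inv_anti₀ (abs_pos.2 hz) (abs_im_le_norm_add_ofReal z t)

lemma conj_inv_add_ofReal (z : ℂ) (t : ℝ) : conj ((z + t)⁻¹) = (conj z + t)⁻¹ := by
  simp

lemma integrable_inv_add_ofReal (hinv : Integrable (fun t : ℝ => t⁻¹) ν)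
    (h0 : ∀ᵐ t ∂ν, t ≠ 0) (hz : z.im ≠ 0) : Integrable (fun t : ℝ => (z + t)⁻¹) ν :=
  (hinv.norm.const_mul _).mono' (by fun_prop)
    (h0.mono fun _ ht => norm_inv_add_ofReal_le hz ht)

lemma MeasureTheory.Integrable.inv_add_ofReal_mul (hz : Integrable (fun t : ℝ => (z + t)⁻¹) ν)
    (hw : w.im ≠ 0) : Integrable (fun t : ℝ => (z + t)⁻¹ * (w + t)⁻¹) ν :=
  hz.mul_bdd (by fun_prop) (ae_of_all _ (norm_inv_add_ofReal_le_inv_abs_im hw))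

lemma integral_inv_add_ofReal_sub (hz0 : z.im ≠ 0) (hw0 : w.im ≠ 0)
    (hz : Integrable (fun t : ℝ => (z + t)⁻¹) ν) (hw : Integrable (fun t : ℝ => (w + t)⁻¹) ν) :
    ∫ t, (z + t)⁻¹ ∂ν - ∫ t, (w + t)⁻¹ ∂ν = (w - z) * ∫ t, (z + t)⁻¹ * (w + t)⁻¹ ∂ν := by
  rw [← integral_sub hz hw, ← integral_const_mul]
  congr 1 with t
  field_simp [add_ofReal_ne_zero hz0 t, add_ofReal_ne_zero hw0 t]
  ring

end CauchyTransform

section KelvinVoigt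

/-- With `ν = μ` restricted to `(0, ∞)`, `a = ε n²` and `b = n²` this is `H_n`. -/
noncomputable def kvChar (ν : Measure ℝ) (a b : ℝ) (z : ℂ) : ℂ :=
  z ^ 2 + a * z + b - b * ∫ t, (z + t)⁻¹ ∂ν

noncomputable def kvDivDiff (ν : Measure ℝ) (a b : ℝ) (z w : ℂ) : ℂ :=
  z + w + a + b * ∫ t, (z + t)⁻¹ * (w + t)⁻¹ ∂ν

variable {ν : Measure ℝ} {a b : ℝ} {z w : ℂ}

lemma kvChar_conj (z : ℂ) : kvChar ν a b (conj z) = conj (kvChar ν a b z) := by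
  simp only [kvChar, ← conj_inv_add_ofReal, integral_conj, map_sub, map_add, map_mul, map_pow,
    conj_ofReal]

lemma kvChar_sub_kvChar (hν : ∀ z : ℂ, z.im ≠ 0 → Integrable (fun t : ℝ => (z + t)⁻¹) ν)
    (hz : z.im ≠ 0) (hw : w.im ≠ 0) :
    kvChar ν a b z - kvChar ν a b w = (z - w) * kvDivDiff ν a b z w := by
  have hK := integral_inv_add_ofReal_sub hz hw (hν z hz) (hν w hw)
  simp only [kvChar, kvDivDiff]
  linear_combination (-(b : ℂ)) * hK

lemma kvDivDiff_eq_zero (hν : ∀ z : ℂ, z.im ≠ 0 → Integrable (fun t : ℝ => (z + t)⁻¹) ν)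
    (hz : z.im ≠ 0) (hw : w.im ≠ 0) (hne : z ≠ w)
    (hHz : kvChar ν a b z = 0) (hHw : kvChar ν a b w = 0) : kvDivDiff ν a b z w = 0 := by
  have h := kvChar_sub_kvChar (a := a) (b := b) hν hz hw
  rw [hHz, hHw, sub_zero, eq_comm, mul_eq_zero] at h
  exact h.resolve_left (sub_ne_zero.2 hne)

lemma kvDivDiff_conj_eq_zero (hν : ∀ z : ℂ, z.im ≠ 0 → Integrable (fun t : ℝ => (z + t)⁻¹) ν)
    (hz : z.im ≠ 0) (hHz : kvChar ν a b z = 0) : kvDivDiff ν a b z (conj z) = 0 :=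
  kvDivDiff_eq_zero hν hz (by simpa using hz) (fun h => hz (conj_eq_iff_im.1 h.symm)) hHz
    (by rw [kvChar_conj, hHz, map_zero])

lemma kvDivDiff_conj (z : ℂ) :
    kvDivDiff ν a b z (conj z) = ((2 * z.re + a + b * ∫ t, normSq (z + t)⁻¹ ∂ν : ℝ) : ℂ) := by
  have hpt : ∀ t : ℝ, (z + t)⁻¹ * (conj z + t)⁻¹ = normSq (z + t)⁻¹ := fun t => by
    rw [← conj_inv_add_ofReal, mul_conj]
  simp only [kvDivDiff, hpt, add_conj]
  rw [integral_complex_ofReal]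
  push_cast
  ring

lemma kvDivDiff_conj_add_conj_sub_sub
    (hν : ∀ z : ℂ, z.im ≠ 0 → Integrable (fun t : ℝ => (z + t)⁻¹) ν)
    (hz : z.im ≠ 0) (hw : w.im ≠ 0) :
    kvDivDiff ν a b z (conj z) + kvDivDiff ν a b w (conj w) - kvDivDiff ν a b z w
        - kvDivDiff ν a b (conj z) (conj w)
      = ((b * ∫ t, normSq ((z + t)⁻¹ - (conj w + t)⁻¹) ∂ν : ℝ) : ℂ) := by
  have hz' : (conj z).im ≠ 0 := by simpa using hz
  have hw' : (conj w).im ≠ 0 := by simpa using hw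
  have hpt : ∀ t : ℝ, (normSq ((z + t)⁻¹ - (conj w + t)⁻¹) : ℂ)
      = (z + t)⁻¹ * (conj z + t)⁻¹ + (w + t)⁻¹ * (conj w + t)⁻¹
        - (z + t)⁻¹ * (w + t)⁻¹ - (conj z + t)⁻¹ * (conj w + t)⁻¹ := fun t => by
    rw [normSq_eq_conj_mul_self, map_sub, conj_inv_add_ofReal, conj_inv_add_ofReal, conj_conj]
    ring
  have h₁ := (hν z hz).inv_add_ofReal_mul hz'
  have h₂ := (hν w hw).inv_add_ofReal_mul hw'
  have h₃ := (hν z hz).inv_add_ofReal_mul hw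
  have h₄ := (hν (conj z) hz').inv_add_ofReal_mul hw'
  push_cast
  rw [← integral_complex_ofReal]
  simp only [kvDivDiff, hpt]
  rw [integral_sub _ h₄, integral_sub _ h₃, integral_add h₁ h₂]
  · ring
  exacts [h₁.add h₂, (h₁.add h₂).sub h₃]

lemma integrable_normSq_inv_add_ofReal_sub
    (hν : ∀ z : ℂ, z.im ≠ 0 → Integrable (fun t : ℝ => (z + t)⁻¹) ν)
    (hz : z.im ≠ 0) (hw : w.im ≠ 0) :
    Integrable (fun t : ℝ => normSq ((z + t)⁻¹ - (w + t)⁻¹)) ν := by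
  have hdiff := ((hν z hz).sub (hν w hw)).norm
  simp only [normSq_eq_norm_sq, sq]
  refine hdiff.mul_bdd (c := |z.im|⁻¹ + |w.im|⁻¹) hdiff.aestronglyMeasurable
    (ae_of_all _ fun t => ?_)
  rw [norm_norm]
  exact (norm_sub_le _ _).trans (add_le_add (norm_inv_add_ofReal_le_inv_abs_im hz t)
    (norm_inv_add_ofReal_le_inv_abs_im hw t))

theorem re_neg_of_kvChar_eq_zero
    (hν : ∀ z : ℂ, z.im ≠ 0 → Integrable (fun t : ℝ => (z + t)⁻¹) ν)
    (ha : 0 < a) (hb : 0 ≤ b) (hz : 0 < z.im) (hHz : kvChar ν a b z = 0) : z.re < 0 := by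
  have h := kvDivDiff_conj_eq_zero hν hz.ne' hHz
  rw [kvDivDiff_conj, ofReal_eq_zero] at h
  have hI : 0 ≤ b * ∫ t, normSq (z + t)⁻¹ ∂ν :=
    mul_nonneg hb (integral_nonneg fun _ => normSq_nonneg _)
  linarith

theorem eq_of_kvChar_eq_zero
    (hν : ∀ z : ℂ, z.im ≠ 0 → Integrable (fun t : ℝ => (z + t)⁻¹) ν) (hν0 : ν ≠ 0)
    (hb : b ≠ 0) (hz : 0 < z.im) (hw : 0 < w.im)
    (hHz : kvChar ν a b z = 0) (hHw : kvChar ν a b w = 0) : z = w := by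
  by_contra hne
  have hw' : (conj w).im ≠ 0 := by simpa using hw.ne'
  have hsum := kvDivDiff_conj_add_conj_sub_sub (a := a) (b := b) hν hz.ne' hw.ne'
  rw [kvDivDiff_conj_eq_zero hν hz.ne' hHz, kvDivDiff_conj_eq_zero hν hw.ne' hHw,
    kvDivDiff_eq_zero hν hz.ne' hw.ne' hne hHz hHw,
    kvDivDiff_eq_zero hν (by simpa using hz.ne') hw' ((starRingEnd ℂ).injective.ne hne)
      (by rw [kvChar_conj, hHz, map_zero]) (by rw [kvChar_conj, hHw, map_zero]),
    sub_zero, add_zero, sub_zero, eq_comm, ofReal_eq_zero, mul_eq_zero] at hsum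
  have hae := (integral_eq_zero_iff_of_nonneg (fun _ => normSq_nonneg _)
    (integrable_normSq_inv_add_ofReal_sub hν hz.ne' hw')).1 (hsum.resolve_left hb)
  refine hν0 (ae_eq_bot.1 (Filter.eventually_false_iff_eq_bot.1 ?_))
  filter_upwards [hae] with t ht
  have hzw : z = conj w := by
    simpa using inv_injective (sub_eq_zero.1 (normSq_eq_zero.1 ht))
  have := congrArg im hzw
  simp only [conj_im] at this
  linarith

end KelvinVoigt

theorem KV_at_most_one_zero_upper_half_plane
    (μ : Measure ℝ) (hμ : μ ≠ 0) (hsupp : μ (Set.Iic 0) = 0)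
    (hint : ∫⁻ t in Set.Ioi (0 : ℝ), ENNReal.ofReal t⁻¹ ∂μ < ⊤)
    (K : ℂ → ℂ) (hK : ∀ z, K z = ∫ t in Set.Ioi (0 : ℝ), (z + (t : ℂ))⁻¹ ∂μ)
    (ε : ℝ) (hε : 0 < ε) (n : ℕ) (hn : 1 ≤ n)
    (H : ℂ → ℂ)
    (hH : ∀ z, H z = z ^ 2 + (ε : ℂ) * (n : ℂ) ^ 2 * z + (n : ℂ) ^ 2
        - (n : ℂ) ^ 2 * K z) :
    (∀ z₁ z₂ : ℂ, 0 < z₁.im → 0 < z₂.im → H z₁ = 0 → H z₂ = 0 → z₁ = z₂) ∧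
    (∀ z : ℂ, 0 < z.im → H z = 0 → z.re < 0) := by
  set ν := μ.restrict (Set.Ioi 0)
  have hpos : ∀ᵐ t ∂ν, 0 < t := ae_restrict_mem measurableSet_Ioi
  have hinv : Integrable (fun t : ℝ => t⁻¹) ν :=
    (lintegral_ofReal_ne_top_iff_integrable (by fun_prop)
      (hpos.mono fun _ ht => (inv_pos.2 ht).le)).1 hint.ne
  have hν : ∀ z : ℂ, z.im ≠ 0 → Integrable (fun t : ℝ => (z + t)⁻¹) ν :=
    fun z => integrable_inv_add_ofReal hinv (hpos.mono fun _ ht => ht.ne')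
  have hν0 : ν ≠ 0 := fun h => hμ <| by
    rw [← Measure.restrict_add_restrict_compl (μ := μ) (measurableSet_Iic (a := (0 : ℝ))),
      Set.compl_Iic, Measure.restrict_eq_zero.2 hsupp, zero_add]
    exact h
  have hn2 : (0 : ℝ) < (n : ℝ) ^ 2 := by positivity
  have hHν : H = kvChar ν (ε * n ^ 2) (n ^ 2) := by
    funext z
    rw [hH, hK, kvChar]
    push_cast
    ring
  subst hHν
  exact ⟨fun _ _ h₁ h₂ => eq_of_kvChar_eq_zero hν hν0 hn2.ne' h₁ h₂,
    fun _ hz => re_neg_of_kvChar_eq_zero hν (by positivity) hn2.le hz⟩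
end

section
/- Let μ be a finite nonzero positive measure on (d₀,∞), d₀ > 0, with total mass A, and K its Cauchy transform. If for each large n, z_n ∈ ℂ₊ is a zero of F_n(z) = z + n²K(z), then z_n = i√A·n + o(n) as n → ∞. -/
/-!
Let `ν = μ|_(0,∞)`, `K` its Cauchy transform and `J(w) = ∫ |w + t|⁻² dν(t)`
(`cauchyKernelNormSq`), so that `Im K(w) = -Im w · J(w)`. Taking imaginary parts in
`z + n²K(z) = 0` with `Im z > 0` gives `J(z_n) = n⁻²`. Cauchy–Schwarz then bounds
`|K(z_n)| ≤ √A / n`, i.e. `|z_n| ≤ √A n`, while `J(z_n) → 0` forces `|z_n| → ∞`.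
Since `A - w K(w) = ∫ t / (w + t) dν`, splitting this integral at `|t| = √|w|` and bounding the
tail by Cauchy–Schwarz once more gives `z_n K(z_n) → A`, that is `(z_n / n)² → -A`;
as `Im z_n > 0`, the relevant square root is `i√A`.
-/

open MeasureTheory Complex Filter Set Topology

theorem integral_le_sqrt_measureReal_univ_mul_sqrt_integral_sq {α : Type*} [MeasurableSpace α]
    {ν : Measure α} [IsFiniteMeasure ν] {f : α → ℝ} (hf0 : 0 ≤ᵐ[ν] f) (hf : MemLp f 2 ν) :
    ∫ x, f x ∂ν ≤ √(ν.real univ) * √(∫ x, f x ^ 2 ∂ν) := by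
  have h := integral_mul_le_Lp_mul_Lq_of_nonneg Real.HolderConjugate.two_two
    (ae_of_all _ fun _ => zero_le_one) hf0 (memLp_const (1 : ℝ)) (by simpa using hf)
  simpa [Real.sqrt_eq_rpow] using h

noncomputable def cauchyTransform (ν : Measure ℝ) (w : ℂ) : ℂ := ∫ t, (w + t)⁻¹ ∂ν

noncomputable def cauchyKernelNormSq (ν : Measure ℝ) (w : ℂ) : ℝ := ∫ t, ‖(w + t)⁻¹‖ ^ 2 ∂ν

section CauchyKernel

variable {ν : Measure ℝ} {w : ℂ}

theorem add_ofReal_ne_zero_s14 (hw : 0 < w.im) (t : ℝ) : w + t ≠ 0 := by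
  intro h
  simpa [hw.ne'] using congrArg Complex.im h

theorem norm_inv_add_ofReal_le_s14 (hw : 0 < w.im) (t : ℝ) : ‖(w + t)⁻¹‖ ≤ w.im⁻¹ := by
  rw [norm_inv]
  exact inv_anti₀ hw (by simpa using im_le_norm (w + t))

theorem memLp_top_inv_add_ofReal (hw : 0 < w.im) : MemLp (fun t : ℝ => (w + t)⁻¹) ⊤ ν :=
  memLp_top_of_bound
    ((continuous_const.add continuous_ofReal).inv₀ (add_ofReal_ne_zero_s14 hw)).aestronglyMeasurable
    _ (ae_of_all _ (norm_inv_add_ofReal_le_s14 hw))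

variable [IsFiniteMeasure ν]

theorem integrable_inv_add_ofReal_s14 (hw : 0 < w.im) : Integrable (fun t : ℝ => (w + t)⁻¹) ν :=
  (memLp_top_inv_add_ofReal hw).integrable le_top

theorem memLp_two_norm_inv_add_ofReal (hw : 0 < w.im) : MemLp (fun t : ℝ => ‖(w + t)⁻¹‖) 2 ν :=
  ((memLp_top_inv_add_ofReal hw).mono_exponent le_top).norm

theorem setIntegral_norm_inv_add_ofReal_le (hw : 0 < w.im) (s : Set ℝ) :
    ∫ t in s, ‖(w + t)⁻¹‖ ∂ν ≤ √(ν.real s) * √(cauchyKernelNormSq ν w) := by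
  calc ∫ t in s, ‖(w + t)⁻¹‖ ∂ν
      ≤ √((ν.restrict s).real univ) * √(∫ t in s, ‖(w + t)⁻¹‖ ^ 2 ∂ν) :=
        integral_le_sqrt_measureReal_univ_mul_sqrt_integral_sq (ae_of_all _ fun _ => norm_nonneg _)
          ((memLp_two_norm_inv_add_ofReal hw).restrict s)
    _ ≤ √(ν.real s) * √(cauchyKernelNormSq ν w) := by
        rw [measureReal_restrict_apply_univ]
        gcongr
        exact setIntegral_le_integral (memLp_two_norm_inv_add_ofReal hw).integrable_sq
          (ae_of_all _ fun _ => by positivity)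

theorem norm_cauchyTransform_le (hw : 0 < w.im) :
    ‖cauchyTransform ν w‖ ≤ √(ν.real univ) * √(cauchyKernelNormSq ν w) := by
  calc ‖cauchyTransform ν w‖ ≤ ∫ t, ‖(w + t)⁻¹‖ ∂ν := norm_integral_le_integral_norm _
    _ ≤ _ := by simpa using setIntegral_norm_inv_add_ofReal_le (ν := ν) hw univ

theorem im_cauchyTransform (hw : 0 < w.im) :
    (cauchyTransform ν w).im = -w.im * cauchyKernelNormSq ν w := by
  have hpt (t : ℝ) : ((w + t)⁻¹).im = -w.im * ‖(w + t)⁻¹‖ ^ 2 := by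
    rw [inv_im, norm_inv, inv_pow, Complex.sq_norm]
    simp [div_eq_mul_inv]
  rw [cauchyTransform, cauchyKernelNormSq, ← integral_const_mul, ← funext hpt]
  exact (imCLM.integral_comp_comm (integrable_inv_add_ofReal_s14 hw)).symm

theorem exists_pos_le_cauchyKernelNormSq (hν : ν ≠ 0) {M : ℝ} (hM : 0 < M) :
    ∃ c > 0, ∀ w : ℂ, 0 < w.im → ‖w‖ ≤ M → c ≤ cauchyKernelNormSq ν w := by
  have hpos (t : ℝ) : 0 < M + |t| := by positivity
  have hint : Integrable (fun t : ℝ => ((M + |t|) ^ 2)⁻¹) ν := by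
    refine (integrable_const (M ^ 2)⁻¹).mono' (by fun_prop) (ae_of_all _ fun t => ?_)
    rw [Real.norm_of_nonneg (by positivity)]
    gcongr
    exact le_add_of_nonneg_right (abs_nonneg t)
  refine ⟨∫ t, ((M + |t|) ^ 2)⁻¹ ∂ν, ?_, fun w hw hwM => ?_⟩
  · show 0 < _
    rw [integral_pos_iff_support_of_nonneg (fun t => by positivity) hint]
    simpa [Function.support, fun t => (hpos t).ne'] using hν
  · refine integral_mono hint (memLp_two_norm_inv_add_ofReal hw).integrable_sq fun t => ?_
    have hne : 0 < ‖w + t‖ := norm_pos_iff.2 (add_ofReal_ne_zero_s14 hw t)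
    have hle : ‖w + t‖ ≤ M + |t| := (norm_add_le _ _).trans (by simpa using hwM)
    simp only [norm_inv, inv_pow]
    gcongr

theorem tendsto_norm_atTop_of_tendsto_cauchyKernelNormSq_zero (hν : ν ≠ 0) {ι : Type*}
    {l : Filter ι} {w : ι → ℂ} (him : ∀ᶠ i in l, 0 < (w i).im)
    (hJ : Tendsto (fun i => cauchyKernelNormSq ν (w i)) l (𝓝 0)) :
    Tendsto (fun i => ‖w i‖) l atTop := by
  refine tendsto_atTop.2 fun M => ?_
  obtain ⟨c, hc, hle⟩ :=
    exists_pos_le_cauchyKernelNormSq hν (lt_max_of_lt_right one_pos : 0 < max M 1)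
  filter_upwards [him, hJ.eventually (gt_mem_nhds hc)] with i hi hJi
  by_contra! h
  exact (hle (w i) hi (h.le.trans (le_max_left _ _))).not_gt hJi

theorem ofReal_mul_inv_add_ofReal (hw : 0 < w.im) (t : ℝ) :
    (t : ℂ) * (w + t)⁻¹ = 1 - w * (w + t)⁻¹ := by
  field_simp [add_ofReal_ne_zero_s14 hw t]
  ring

theorem integrable_ofReal_mul_inv_add_ofReal (hw : 0 < w.im) :
    Integrable (fun t : ℝ => (t : ℂ) * (w + t)⁻¹) ν :=
  ((integrable_const 1).sub ((integrable_inv_add_ofReal_s14 hw).const_mul w)).congr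
    (ae_of_all _ fun t => (ofReal_mul_inv_add_ofReal hw t).symm)

theorem setIntegral_ofReal_mul_inv_add_ofReal (hw : 0 < w.im) (s : Set ℝ) :
    ∫ t in s, (t : ℂ) * (w + t)⁻¹ ∂ν = ν.real s - w * ∫ t in s, (w + t)⁻¹ ∂ν := by
  simp_rw [ofReal_mul_inv_add_ofReal hw]
  rw [integral_sub (integrable_const 1) ((integrable_inv_add_ofReal_s14 hw).restrict.const_mul w),
    integral_const_mul]
  simp

theorem norm_setIntegral_ofReal_mul_inv_add_ofReal_le_of_abs_le {T : ℝ} (hT : 0 ≤ T)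
    (hTw : T < ‖w‖) :
    ‖∫ t in {t : ℝ | |t| ≤ T}, (t : ℂ) * (w + t)⁻¹ ∂ν‖ ≤ T / (‖w‖ - T) * ν.real univ := by
  refine (norm_setIntegral_le_of_norm_le_const (C := T / (‖w‖ - T)) (measure_lt_top _ _)
    fun t ht => ?_).trans ?_
  · have hlow : ‖w‖ - T ≤ ‖w + t‖ :=
      (sub_le_sub_left (by simpa using ht) _).trans (norm_sub_le_norm_add w (t : ℂ))
    rw [norm_mul, norm_inv, ← div_eq_mul_inv, norm_real, Real.norm_eq_abs]
    exact div_le_div₀ hT ht (by linarith) hlow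
  · exact mul_le_mul_of_nonneg_left (measureReal_mono (subset_univ _))
      (div_nonneg hT (by linarith))

theorem norm_setIntegral_ofReal_mul_inv_add_ofReal_le (hw : 0 < w.im) (s : Set ℝ) :
    ‖∫ t in s, (t : ℂ) * (w + t)⁻¹ ∂ν‖ ≤
      ν.real s + ‖w‖ * √(cauchyKernelNormSq ν w) * √(ν.real s) := by
  rw [setIntegral_ofReal_mul_inv_add_ofReal hw]
  calc _ ≤ ‖(ν.real s : ℂ)‖ + ‖w‖ * ‖∫ t in s, (w + t)⁻¹ ∂ν‖ := by
        rw [← norm_mul]; exact norm_sub_le _ _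
    _ ≤ ν.real s + ‖w‖ * (√(ν.real s) * √(cauchyKernelNormSq ν w)) := by
        rw [norm_real, Real.norm_of_nonneg measureReal_nonneg]
        gcongr
        exact (norm_integral_le_integral_norm _).trans (setIntegral_norm_inv_add_ofReal_le hw s)
    _ = _ := by ring

theorem norm_measureReal_sub_mul_cauchyTransform_le (hw : 0 < w.im) {T : ℝ} (hT : 0 ≤ T)
    (hTw : T < ‖w‖) :
    ‖(ν.real univ : ℂ) - w * cauchyTransform ν w‖ ≤ T / (‖w‖ - T) * ν.real univ +
      (ν.real {t | T < |t|} + ‖w‖ * √(cauchyKernelNormSq ν w) * √(ν.real {t | T < |t|})) := by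
  have hcompl : {t : ℝ | |t| ≤ T}ᶜ = {t | T < |t|} := by ext; simp
  rw [cauchyTransform, ← setIntegral_univ, ← setIntegral_ofReal_mul_inv_add_ofReal hw,
    setIntegral_univ,
    ← integral_add_compl (measurableSet_le continuous_abs.measurable measurable_const)
      (integrable_ofReal_mul_inv_add_ofReal hw), hcompl]
  exact (norm_add_le _ _).trans (add_le_add
    (norm_setIntegral_ofReal_mul_inv_add_ofReal_le_of_abs_le hT hTw)
    (norm_setIntegral_ofReal_mul_inv_add_ofReal_le hw _))

variable (ν) in
theorem tendsto_measureReal_abs_gt_atTop_zero :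
    Tendsto (fun T : ℝ => ν.real {t | T < |t|}) atTop (𝓝 0) := by
  have h := tendsto_measure_norm_gt_of_isTightMeasureSet (isTightMeasureSet_singleton (μ := ν))
  simp only [mem_singleton_iff, iSup_iSup_eq_left, Real.norm_eq_abs] at h
  exact (ENNReal.tendsto_toReal ENNReal.zero_ne_top).comp h

-- `hbdd` holds in particular for nontangential approach `Im w ≥ c ‖w‖`,
-- since `cauchyKernelNormSq ν w ≤ ν(ℝ) / (Im w)²`.
theorem tendsto_mul_cauchyTransform {ι : Type*} {l : Filter ι} {w : ι → ℂ} {C : ℝ}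
    (him : ∀ᶠ i in l, 0 < (w i).im) (hnorm : Tendsto (fun i => ‖w i‖) l atTop)
    (hbdd : ∀ᶠ i in l, ‖w i‖ * √(cauchyKernelNormSq ν (w i)) ≤ C) :
    Tendsto (fun i => w i * cauchyTransform ν (w i)) l (𝓝 (ν.real univ)) := by
  -- split the integral at `|t| = T = √‖w‖`, which tends to infinity but is `o(‖w‖)`
  set T : ι → ℝ := fun i => √‖w i‖
  have hT : Tendsto T l atTop := Real.tendsto_sqrt_atTop.comp hnorm
  have hnear : Tendsto (fun i => T i / (‖w i‖ - T i)) l (𝓝 0) := by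
    refine (tendsto_inv_atTop_zero.comp (tendsto_atTop_add_const_right _ (-1) hT)).congr' ?_
    filter_upwards [hT.eventually_gt_atTop 1] with i hi
    have hw : ‖w i‖ = T i ^ 2 := (Real.sq_sqrt (norm_nonneg _)).symm
    have hT1 : T i + -1 ≠ 0 := by linarith
    rw [Function.comp_apply, hw]
    field_simp
    ring
  have htail := (tendsto_measureReal_abs_gt_atTop_zero ν).comp hT
  have hbound := (hnear.mul_const (ν.real univ)).add (htail.add (htail.sqrt.const_mul C))
  simp only [zero_mul, Real.sqrt_zero, mul_zero, add_zero] at hbound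
  rw [tendsto_iff_norm_sub_tendsto_zero]
  refine squeeze_zero' (Eventually.of_forall fun _ => norm_nonneg _) ?_ hbound
  filter_upwards [him, hbdd, hT.eventually_gt_atTop 1] with i hi hC hT1
  have hTw : T i < ‖w i‖ := by
    rw [← Real.sq_sqrt (norm_nonneg (w i))]
    nlinarith
  rw [norm_sub_rev]
  refine (norm_measureReal_sub_mul_cauchyTransform_le hi (Real.sqrt_nonneg _) hTw).trans ?_
  dsimp only [Function.comp_apply]
  gcongr

theorem mul_cauchyKernelNormSq_eq_one_of_add_mul_eq_zero (hw : 0 < w.im) {r : ℝ}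
    (h : w + r * cauchyTransform ν w = 0) : r * cauchyKernelNormSq ν w = 1 := by
  have him := congrArg Complex.im h
  rw [add_im, im_ofReal_mul, im_cauchyTransform hw, zero_im] at him
  have : w.im * (1 - r * cauchyKernelNormSq ν w) = 0 := by linear_combination him
  linarith [(mul_eq_zero.1 this).resolve_left hw.ne']

theorem norm_mul_sqrt_cauchyKernelNormSq_le_of_add_mul_eq_zero (hw : 0 < w.im) {r : ℝ}
    (h : w + r * cauchyTransform ν w = 0) :
    ‖w‖ * √(cauchyKernelNormSq ν w) ≤ √(ν.real univ) := by
  have hrJ := mul_cauchyKernelNormSq_eq_one_of_add_mul_eq_zero hw h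
  have hJ : 0 ≤ cauchyKernelNormSq ν w := integral_nonneg fun _ => by positivity
  have hr : 0 < r := by nlinarith
  calc ‖w‖ * √(cauchyKernelNormSq ν w)
      = r * ‖cauchyTransform ν w‖ * √(cauchyKernelNormSq ν w) := by
        nth_rw 1 [eq_neg_of_add_eq_zero_left h]
        rw [norm_neg, norm_mul, norm_real, Real.norm_of_nonneg hr.le]
    _ ≤ r * (√(ν.real univ) * √(cauchyKernelNormSq ν w)) * √(cauchyKernelNormSq ν w) := by
        gcongr
        exact norm_cauchyTransform_le hw
    _ = √(ν.real univ) * (r * √(cauchyKernelNormSq ν w) ^ 2) := by ring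
    _ = √(ν.real univ) := by rw [Real.sq_sqrt hJ, hrJ, mul_one]

theorem tendsto_mul_cauchyTransform_of_add_mul_eq_zero {ι : Type*} {l : Filter ι} [l.NeBot]
    {w : ι → ℂ} {r : ι → ℝ} (hr : Tendsto r l atTop)
    (hzero : ∀ᶠ i in l, 0 < (w i).im ∧ w i + r i * cauchyTransform ν (w i) = 0) :
    Tendsto (fun i => w i * cauchyTransform ν (w i)) l (𝓝 (ν.real univ)) := by
  have him : ∀ᶠ i in l, 0 < (w i).im := hzero.mono fun i hi => hi.1
  have hrJ : ∀ᶠ i in l, r i * cauchyKernelNormSq ν (w i) = 1 :=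
    hzero.mono fun i hi => mul_cauchyKernelNormSq_eq_one_of_add_mul_eq_zero hi.1 hi.2
  have hJ : Tendsto (fun i => cauchyKernelNormSq ν (w i)) l (𝓝 0) :=
    (tendsto_inv_atTop_zero.comp hr).congr' <|
      hrJ.mono fun i hi => (eq_inv_of_mul_eq_one_right hi).symm
  have hν : ν ≠ 0 := by
    rintro rfl
    simpa [cauchyKernelNormSq] using hrJ.exists
  exact tendsto_mul_cauchyTransform him
    (tendsto_norm_atTop_of_tendsto_cauchyKernelNormSq_zero hν him hJ)
    (hzero.mono fun i hi => norm_mul_sqrt_cauchyKernelNormSq_le_of_add_mul_eq_zero hi.1 hi.2)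

end CauchyKernel

theorem norm_sub_mul_I_sq_le {a : ℝ} (ha : 0 ≤ a) {u : ℂ} (hu : 0 ≤ u.im) :
    ‖u - a * I‖ ^ 2 ≤ ‖u ^ 2 + (a : ℂ) ^ 2‖ := by
  have hle : ‖u - a * I‖ ≤ ‖u + a * I‖ := by
    rw [← sq_le_sq₀ (norm_nonneg _) (norm_nonneg _), Complex.sq_norm, Complex.sq_norm]
    simp only [normSq_apply, sub_re, add_re, sub_im, add_im, mul_re, mul_im, ofReal_re,
      ofReal_im, I_re, I_im]
    nlinarith
  calc ‖u - a * I‖ ^ 2 ≤ ‖u - a * I‖ * ‖u + a * I‖ := by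
        rw [sq]; exact mul_le_mul_of_nonneg_left hle (norm_nonneg _)
    _ = ‖u ^ 2 + (a : ℂ) ^ 2‖ := by
        rw [← norm_mul]
        congr 1
        linear_combination (-(a : ℂ) ^ 2) * I_sq

theorem tendsto_sub_mul_I_of_tendsto_sq_add_sq {ι : Type*} {l : Filter ι} {u : ι → ℂ} {a : ℝ}
    (ha : 0 ≤ a) (hu : ∀ᶠ i in l, 0 ≤ (u i).im)
    (h : Tendsto (fun i => u i ^ 2 + (a : ℂ) ^ 2) l (𝓝 0)) :
    Tendsto (fun i => u i - a * I) l (𝓝 0) :=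
  squeeze_zero_norm' (hu.mono fun _ hi => Real.le_sqrt_of_sq_le (norm_sub_mul_I_sq_le ha hi))
    (by simpa using h.norm.sqrt)

theorem GP1_zeros_asymptotics_general
    (μ : Measure ℝ) [IsFiniteMeasure μ]
    (A : ℝ) (hA : A = (μ (Set.Ioi (0 : ℝ))).toReal)
    (K : ℂ → ℂ) (hK : ∀ z, K z = ∫ t in Set.Ioi (0 : ℝ), (z + (t : ℂ))⁻¹ ∂μ)
    (z : ℕ → ℂ) (N : ℕ)
    (hz : ∀ n, N ≤ n → 0 < (z n).im ∧ z n + (n : ℂ) ^ 2 * K (z n) = 0) :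
    Tendsto (fun n : ℕ =>
        (z n - Complex.I * (Real.sqrt A : ℂ) * (n : ℂ)) / (n : ℂ))
      atTop (nhds 0) := by
  set ν := μ.restrict (Set.Ioi 0)
  obtain rfl : K = cauchyTransform ν := funext hK
  obtain rfl : A = ν.real univ := by simp [hA, ν, measureReal_def]
  have hzero : ∀ᶠ n : ℕ in atTop, 0 < (z n).im ∧
      z n + ((n ^ 2 : ℝ) : ℂ) * cauchyTransform ν (z n) = 0 :=
    (eventually_ge_atTop N).mono fun n hN => ⟨(hz n hN).1, by push_cast; exact (hz n hN).2⟩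
  have hmul := tendsto_mul_cauchyTransform_of_add_mul_eq_zero
    ((tendsto_pow_atTop two_ne_zero).comp tendsto_natCast_atTop_atTop) hzero
  have hsq : Tendsto (fun n : ℕ => (z n / n) ^ 2 + (√(ν.real univ) : ℂ) ^ 2) atTop (𝓝 0) := by
    rw [← sub_self (ν.real univ : ℂ)]
    refine (tendsto_const_nhds.sub hmul).congr' ?_
    filter_upwards [hzero, eventually_ne_atTop 0] with n hzn hn
    have h := hzn.2
    rw [← ofReal_pow, Real.sq_sqrt measureReal_nonneg]
    push_cast at h
    field_simp
    linear_combination (-(z n)) * h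
  have hu : ∀ᶠ n : ℕ in atTop, 0 ≤ (z n / n).im :=
    hzero.mono fun n hn => by rw [div_natCast_im]; exact div_nonneg hn.1.le n.cast_nonneg
  refine (tendsto_sub_mul_I_of_tendsto_sq_add_sq (Real.sqrt_nonneg _) hu hsq).congr' ?_
  filter_upwards [eventually_ne_atTop 0] with n hn
  field_simp

theorem GP1_zeros_asymptotics
    (μ : Measure ℝ) (hμ : μ ≠ 0) [IsFiniteMeasure μ] (d₀ : ℝ) (hd₀ : 0 < d₀)
    (hsupp : μ (Set.Iic d₀) = 0)
    (A : ℝ) (hA : A = (μ (Set.Ioi (0 : ℝ))).toReal)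
    (K : ℂ → ℂ) (hK : ∀ z, K z = ∫ t in Set.Ioi (0 : ℝ), (z + (t : ℂ))⁻¹ ∂μ)
    (z : ℕ → ℂ) (N : ℕ)
    (hz : ∀ n, N ≤ n → 0 < (z n).im ∧ z n + (n : ℂ) ^ 2 * K (z n) = 0) :
    Tendsto (fun n : ℕ =>
        (z n - Complex.I * (Real.sqrt A : ℂ) * (n : ℂ)) / (n : ℂ))
      atTop (nhds 0) :=
  GP1_zeros_asymptotics_general μ A hA K hK z N hz
end
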